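/- arXiv:1610.08364 — 5 statements merged into one kernel-verified Lean document; each statement's English description precedes it below -/
import Mathlib

section
/- The 2×2 matrix multiplication tensor admits the rank-7 decomposition M₂ = A⊗A⊗A + B⊗B⊗B + C⊗C⊗C + D⊗D⊗D + (X⊗Y⊗Z + Y⊗Z⊗X + Z⊗X⊗Y), where A = [[0,−1],[1,−1]], B = [[1,0],[0,0]], C = [[0,1],[0,1]], D = [[0,0],[−1,1]], X = [[0,1],[0,0]], Y = [[0,0],[1,0]], Z = [[1,−1],[1,−1]] (2×2 complex matrices given by their rows). -/
open scoped TensorProduct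
open Matrix

noncomputable section

abbrev M2 := Matrix (Fin 2) (Fin 2) ℂ
abbrev W2 := M2 ⊗[ℂ] (M2 ⊗[ℂ] M2)

/-- matrix units -/
def E (i j : Fin 2) : M2 := single i j 1

/-- the 2×2 matrix multiplication tensor -/
def MatMul2 : W2 :=
  ∑ i : Fin 2, ∑ j : Fin 2, ∑ k : Fin 2, E i j ⊗ₜ[ℂ] (E j k ⊗ₜ[ℂ] E k i)

def A : M2 := !![0, -1; 1, -1]
def B : M2 := !![1, 0; 0, 0]
def C : M2 := !![0, 1; 0, 1]
def D : M2 := !![0, 0; -1, 1]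
def X : M2 := !![0, 1; 0, 0]
def Y : M2 := !![0, 0; 1, 0]
def Z : M2 := !![1, -1; 1, -1]

theorem M2_eq_sum_E (m : M2) :
    m = m 0 0 • E 0 0 + m 0 1 • E 0 1 + m 1 0 • E 1 0 + m 1 1 • E 1 1 := by
  conv_lhs => rw [matrix_eq_sum_single m]
  simp only [Fin.sum_univ_two, E, smul_single, smul_eq_mul, mul_one, add_assoc]

theorem A_eq_sum_E : A = -E 0 1 + E 1 0 - E 1 1 := by
  rw [M2_eq_sum_E A]; simp [A]; abel

theorem B_eq_E : B = E 0 0 := by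
  rw [M2_eq_sum_E B]; simp [B]

theorem C_eq_sum_E : C = E 0 1 + E 1 1 := by
  rw [M2_eq_sum_E C]; simp [C]

theorem D_eq_sum_E : D = -E 1 0 + E 1 1 := by
  rw [M2_eq_sum_E D]; simp [D]

theorem X_eq_E : X = E 0 1 := by
  rw [M2_eq_sum_E X]; simp [X]

theorem Y_eq_E : Y = E 1 0 := by
  rw [M2_eq_sum_E Y]; simp [Y]

theorem Z_eq_sum_E : Z = E 0 0 - E 0 1 + E 1 0 - E 1 1 := by
  rw [M2_eq_sum_E Z]; simp [Z]; abel

/-- A rank-7 decomposition of the 2×2 matrix multiplication tensor in the Strassen family. -/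
theorem strassen_family_decomposition :
    MatMul2 =
      A ⊗ₜ[ℂ] (A ⊗ₜ[ℂ] A) + B ⊗ₜ[ℂ] (B ⊗ₜ[ℂ] B) + C ⊗ₜ[ℂ] (C ⊗ₜ[ℂ] C) + D ⊗ₜ[ℂ] (D ⊗ₜ[ℂ] D) +
        (X ⊗ₜ[ℂ] (Y ⊗ₜ[ℂ] Z) + Y ⊗ₜ[ℂ] (Z ⊗ₜ[ℂ] X) + Z ⊗ₜ[ℂ] (X ⊗ₜ[ℂ] Y)) := by
  rw [MatMul2, A_eq_sum_E, B_eq_E, C_eq_sum_E, D_eq_sum_E, X_eq_E, Y_eq_E, Z_eq_sum_E]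
  simp only [Fin.sum_univ_two, TensorProduct.add_tmul, TensorProduct.tmul_add,
    TensorProduct.sub_tmul, TensorProduct.tmul_sub, TensorProduct.neg_tmul, TensorProduct.tmul_neg]
  abel
end
end

section
/- Let n ≥ 1, let σ be a permutation of {1,2,3}, and let ψ₁, ψ₂, ψ₃ be linear automorphisms of Matrix (Fin n) (Fin n) ℂ. Suppose the linear automorphism Ψ of W determined by Ψ(x₁⊗x₂⊗x₃) = ψ₁(x_{σ⁻¹(1)}) ⊗ ψ₂(x_{σ⁻¹(2)}) ⊗ ψ₃(x_{σ⁻¹(3)}) satisfies Ψ(Mₙ) = Mₙ. Then there exist invertible matrices a, b, c ∈ Matrix (Fin n) (Fin n) ℂ such that Ψ = φ_{a,b,c} ∘ d, where d is one of the six maps id, κ, κ², τ, κ∘τ, κ²∘τ. (This expresses that the symmetry group of Mₙ is PGLₙ×PGLₙ×PGLₙ extended by the dihedral group D₃.) -/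
/-!
Contracting the last two factors of `Mₙ` against the trace functionals `x ↦ tr (x y)` and
`x ↦ tr (x z)` gives `z y`. For a product map `χ₁ ⊗ χ₂ ⊗ χ₃` fixing `Mₙ` this yields
`χ₁ (χ₃ᵗ z · χ₂ᵗ y) = z y`, where `ᵗ` is the adjoint for the trace form. So `χ₁` is
multiplicative up to the units `χ₃ᵗ⁻¹ 1` and `χ₂ᵗ⁻¹ 1`; normalised by them it is an algebra
automorphism of the matrix algebra, inner by Skolem–Noether, and then all three `χᵢ` are
sandwiches `x ↦ p x q` that fit together as `φ_{a,b,c}`.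

A symmetry permuting the factors by `σ` is such a product map composed with the one of the six
dihedral maps that induces the same permutation, the transposes in `τ` being absorbed into
the `ψᵢ`.
-/

open scoped TensorProduct
open Matrix

noncomputable section

abbrev MatN (n : ℕ) := Matrix (Fin n) (Fin n) ℂ
abbrev WN (n : ℕ) := MatN n ⊗[ℂ] (MatN n ⊗[ℂ] MatN n)

/-- the n×n matrix multiplication tensor -/
def MatMul (n : ℕ) : WN n :=
  ∑ i : Fin n, ∑ j : Fin n, ∑ k : Fin n,
    single i j (1 : ℂ) ⊗ₜ[ℂ] (single j k (1 : ℂ) ⊗ₜ[ℂ] single k i (1 : ℂ))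

/-- x ↦ p * x * q -/
def sandwich (n : ℕ) (p q : MatN n) : MatN n →ₗ[ℂ] MatN n :=
  (LinearMap.mulLeft ℂ p).comp (LinearMap.mulRight ℂ q)

/-- φ_{a,b,c} : x⊗y⊗z ↦ (a x b⁻¹)⊗(b y c⁻¹)⊗(c z a⁻¹) -/
def phiMap (n : ℕ) (a b c : MatN n) : WN n →ₗ[ℂ] WN n :=
  TensorProduct.map (sandwich n a b⁻¹)
    (TensorProduct.map (sandwich n b c⁻¹) (sandwich n c a⁻¹))

def cycOnce (n : ℕ) : WN n ≃ₗ[ℂ] WN n :=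
  (TensorProduct.comm ℂ (MatN n) (MatN n ⊗[ℂ] MatN n)).trans
    (TensorProduct.assoc ℂ (MatN n) (MatN n) (MatN n))

/-- κ : x⊗y⊗z ↦ z⊗x⊗y -/
def kappaMap (n : ℕ) : WN n →ₗ[ℂ] WN n := ((cycOnce n).trans (cycOnce n)).toLinearMap

def tLM (n : ℕ) : MatN n →ₗ[ℂ] MatN n := (transposeLinearEquiv (Fin n) (Fin n) ℂ ℂ).toLinearMap

/-- τ : x⊗y⊗z ↦ xᵀ⊗zᵀ⊗yᵀ -/
def tauMap (n : ℕ) : WN n →ₗ[ℂ] WN n :=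
  TensorProduct.map (tLM n)
    ((TensorProduct.comm ℂ (MatN n) (MatN n)).toLinearMap.comp
      (TensorProduct.map (tLM n) (tLM n)))


lemma kappaMap_tmul (n : ℕ) (x y z : MatN n) :
    kappaMap n (x ⊗ₜ[ℂ] (y ⊗ₜ[ℂ] z)) = z ⊗ₜ[ℂ] (x ⊗ₜ[ℂ] y) := by
  simp [kappaMap, cycOnce]

lemma phiMap_tmul (n : ℕ) (a b c x y z : MatN n) :
    phiMap n a b c (x ⊗ₜ[ℂ] (y ⊗ₜ[ℂ] z)) =
      (a * x * b⁻¹) ⊗ₜ[ℂ] ((b * y * c⁻¹) ⊗ₜ[ℂ] (c * z * a⁻¹)) := by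
  simp [phiMap, sandwich, mul_assoc]

lemma tauMap_tmul (n : ℕ) (x y z : MatN n) :
    tauMap n (x ⊗ₜ[ℂ] (y ⊗ₜ[ℂ] z)) = xᵀ ⊗ₜ[ℂ] (zᵀ ⊗ₜ[ℂ] yᵀ) := by
  simp [tauMap, tLM]

namespace Matrix

variable {K m : Type*} [Field K] [Fintype m]

theorem exists_units_eq_conj_of_algEquiv [DecidableEq m] (f : Matrix m m K ≃ₐ[K] Matrix m m K) :
    ∃ p : (Matrix m m K)ˣ, ∀ x, f x = p * x * p⁻¹ := by
  obtain ⟨T, hT⟩ :=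
    (toLinAlgEquiv'.symm.trans (f.trans toLinAlgEquiv')).eq_linearEquivConjAlgEquiv
  refine ⟨Units.map LinearMap.toMatrixAlgEquiv'.toMonoidHom
    (LinearMap.GeneralLinearGroup.ofLinearEquiv T), fun x => toLinAlgEquiv'.injective ?_⟩
  have hx := congr($hT (toLinAlgEquiv' x))
  simp only [AlgEquiv.trans_apply, AlgEquiv.symm_apply_apply,
    LinearEquiv.conjAlgEquiv_apply] at hx
  rw [hx, map_mul, map_mul]
  simp [Module.End.mul_eq_comp, LinearMap.comp_assoc, LinearMap.GeneralLinearGroup.ofLinearEquiv]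

theorem exists_units_of_map_mul_eq [DecidableEq m] (χ α β : Matrix m m K ≃ₗ[K] Matrix m m K)
    (h : ∀ z y, χ (z * y) = α z * β y) :
    ∃ a b c : (Matrix m m K)ˣ,
      ∀ x, χ x = a * x * b⁻¹ ∧ α x = a * x * c⁻¹ ∧ β x = c * x * b⁻¹ := by
  have hχα : ∀ x, χ x = α x * β 1 := fun x => by simpa using h x 1
  have hχβ : ∀ x, χ x = α 1 * β x := fun x => by simpa using h 1 x
  obtain ⟨u, hu⟩ : IsUnit (β 1) := by
    have : α (χ.symm 1) * β 1 = 1 := by rw [← hχα, χ.apply_symm_apply]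
    exact (isUnit_iff_isUnit_det _).2 (isUnit_det_of_left_inverse this)
  obtain ⟨w, hw⟩ : IsUnit (α 1) := by
    have : α 1 * β (χ.symm 1) = 1 := by rw [← hχβ, χ.apply_symm_apply]
    exact (isUnit_iff_isUnit_det _).2 (isUnit_det_of_right_inverse this)
  let e := (χ.trans (u⁻¹.mulRightLinearEquiv K)).trans (w⁻¹.mulLeftLinearEquiv K _)
  have he : ∀ x, e x = w⁻¹ * χ x * u⁻¹ := fun x => (mul_assoc _ _ _).symm
  let δ : Matrix m m K ≃ₐ[K] Matrix m m K := AlgEquiv.ofLinearEquiv e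
    (by simp [he, hχα, ← hu, ← hw])
    (fun z y => by simp [he, h, hχα z, hχβ y, ← hu, ← hw, mul_assoc])
  obtain ⟨p, hp⟩ := exists_units_eq_conj_of_algEquiv δ
  have hχδ : ∀ x, χ x = w * δ x * u := fun x => by simp [δ, he, mul_assoc]
  have hα : ∀ x, α x = χ x * u⁻¹ := fun x => by simp [hχα, ← hu]
  have hβ : ∀ x, β x = w⁻¹ * χ x := fun x => by simp [hχβ, ← hw]
  refine ⟨w * p, u⁻¹ * p, p, fun x => ⟨?_, ?_, ?_⟩⟩ <;>
    simp [hα, hβ, hχδ, hp, mul_assoc]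

variable (K m) in
def traceDual : Matrix m m K ≃ₗ[K] Module.Dual K (Matrix m m K) :=
  LinearMap.linearEquivOfInjective
    ((LinearMap.mul K (Matrix m m K)).flip.compr₂ (traceLinearMap m K K))
    (fun _ _ h => ext_iff_trace_mul_left.2 fun x => congr($h x))
    Subspace.dual_finrank_eq.symm

@[simp]
theorem traceDual_apply (y x : Matrix m m K) : traceDual K m y x = trace (x * y) := rfl

def traceAdjoint (e : Matrix m m K ≃ₗ[K] Matrix m m K) : Matrix m m K ≃ₗ[K] Matrix m m K :=
  (traceDual K m).trans (e.dualMap.trans (traceDual K m).symm)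

theorem traceDual_traceAdjoint (e : Matrix m m K ≃ₗ[K] Matrix m m K) (y : Matrix m m K) :
    traceDual K m (traceAdjoint e y) = (traceDual K m y).comp e.toLinearMap :=
  (traceDual K m).apply_symm_apply _

theorem apply_eq_of_traceAdjoint_symm_eq [DecidableEq m] (e : Matrix m m K ≃ₗ[K] Matrix m m K)
    (b c : (Matrix m m K)ˣ) (h : ∀ y, (traceAdjoint e).symm y = c * y * b⁻¹) (x : Matrix m m K) :
    e x = b * x * c⁻¹ := by
  have hadj : ∀ y, traceAdjoint e y = c⁻¹ * y * b := fun y => by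
    rw [← LinearEquiv.eq_symm_apply, h]
    simp [mul_assoc]
  refine ext_iff_trace_mul_right.2 fun y => ?_
  have := congr($(traceDual_traceAdjoint e y) x)
  simp only [traceDual_apply, hadj, LinearMap.comp_apply, LinearEquiv.coe_coe] at this
  rw [← this, ← mul_assoc, trace_mul_comm]
  simp only [mul_assoc]

end Matrix

namespace TensorProduct

variable {R M M' N N' P P' : Type*} [CommSemiring R] [AddCommMonoid M] [AddCommMonoid M']
  [AddCommMonoid N] [AddCommMonoid N'] [AddCommMonoid P] [AddCommMonoid P'] [Module R M]
  [Module R M'] [Module R N] [Module R N'] [Module R P] [Module R P']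

def contractTail (f : Module.Dual R N) (g : Module.Dual R P) : M ⊗[R] (N ⊗[R] P) →ₗ[R] M :=
  (TensorProduct.rid R M).toLinearMap ∘ₗ map LinearMap.id (dualDistrib R N P (f ⊗ₜ g))

@[simp]
theorem contractTail_tmul (f : Module.Dual R N) (g : Module.Dual R P) (x : M) (y : N) (z : P) :
    contractTail f g (x ⊗ₜ[R] (y ⊗ₜ[R] z)) = (f y * g z) • x := by
  simp [contractTail]

theorem contractTail_comp_map (f : Module.Dual R N) (g : Module.Dual R P) (χ₁ : M' →ₗ[R] M)
    (χ₂ : N' →ₗ[R] N) (χ₃ : P' →ₗ[R] P) :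
    contractTail f g ∘ₗ map χ₁ (map χ₂ χ₃) = χ₁ ∘ₗ contractTail (f ∘ₗ χ₂) (g ∘ₗ χ₃) :=
  ext_threefold' fun x y z => by simp

end TensorProduct

open TensorProduct

theorem contractTail_traceDual_matMul {n : ℕ} (y z : MatN n) :
    contractTail (traceDual ℂ (Fin n) y) (traceDual ℂ (Fin n) z) (MatMul n) = z * y := by
  rw [matrix_eq_sum_single (z * y), MatMul]
  simp only [map_sum, contractTail_tmul, traceDual_apply, trace_single_mul, one_smul]
  refine Finset.sum_congr rfl fun i _ => Finset.sum_congr rfl fun j _ => ?_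
  simp only [smul_single, smul_eq_mul, mul_one, mul_apply, mul_comm (z i _)]
  exact (map_sum (singleAddMonoidHom (α := ℂ) i j) _ _).symm

theorem exists_map_eq_phiMap_of_map_matMul_eq {n : ℕ} (χ₁ χ₂ χ₃ : MatN n ≃ₗ[ℂ] MatN n)
    (h : map χ₁.toLinearMap (map χ₂.toLinearMap χ₃.toLinearMap) (MatMul n) = MatMul n) :
    ∃ a b c : MatN n, IsUnit a ∧ IsUnit b ∧ IsUnit c ∧
      map χ₁.toLinearMap (map χ₂.toLinearMap χ₃.toLinearMap) = phiMap n a b c := by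
  have key : ∀ y z, χ₁ (traceAdjoint χ₃ z * traceAdjoint χ₂ y) = z * y := fun y z => by
    have := congr(contractTail (traceDual ℂ (Fin n) y) (traceDual ℂ (Fin n) z) $h)
    rwa [← LinearMap.comp_apply, contractTail_comp_map, LinearMap.comp_apply,
      ← traceDual_traceAdjoint, ← traceDual_traceAdjoint, contractTail_traceDual_matMul,
      contractTail_traceDual_matMul] at this
  obtain ⟨a, b, c, habc⟩ :=
    exists_units_of_map_mul_eq χ₁ (traceAdjoint χ₃).symm (traceAdjoint χ₂).symm fun z y => by
      simpa using key ((traceAdjoint χ₂).symm y) ((traceAdjoint χ₃).symm z)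
  refine ⟨a, b, c, a.isUnit, b.isUnit, c.isUnit, ext_threefold' fun x y z => ?_⟩
  rw [phiMap_tmul, map_tmul, map_tmul, LinearEquiv.coe_coe, LinearEquiv.coe_coe,
    LinearEquiv.coe_coe, (habc x).1,
    apply_eq_of_traceAdjoint_symm_eq χ₂ b c (fun y => (habc y).2.2) y,
    apply_eq_of_traceAdjoint_symm_eq χ₃ c a (fun y => (habc y).2.1) z]
  simp [coe_units_inv]

section Dihedral

variable (n : ℕ)

def dihedralMaps : Set (WN n →ₗ[ℂ] WN n) :=
  {LinearMap.id, kappaMap n, (kappaMap n).comp (kappaMap n), tauMap n,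
    (kappaMap n).comp (tauMap n), ((kappaMap n).comp (kappaMap n)).comp (tauMap n)}

theorem kappaMap_matMul : kappaMap n (MatMul n) = MatMul n := by
  simp only [MatMul, map_sum, kappaMap_tmul]
  exact (Finset.sum_congr rfl fun _ _ => Finset.sum_comm).trans Finset.sum_comm

theorem tauMap_matMul : tauMap n (MatMul n) = MatMul n := by
  simp only [MatMul, map_sum, tauMap_tmul, transpose_single]
  exact Finset.sum_comm

theorem apply_matMul_of_mem_dihedralMaps {d : WN n →ₗ[ℂ] WN n} (hd : d ∈ dihedralMaps n) :
    d (MatMul n) = MatMul n := by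
  rcases hd with rfl | rfl | rfl | rfl | rfl | rfl <;>
    simp [kappaMap_matMul, tauMap_matMul]

theorem perm_fin_three_cases (τ : Equiv.Perm (Fin 3)) :
    (τ 0 = 0 ∧ τ 1 = 1 ∧ τ 2 = 2) ∨ (τ 0 = 2 ∧ τ 1 = 0 ∧ τ 2 = 1) ∨
    (τ 0 = 1 ∧ τ 1 = 2 ∧ τ 2 = 0) ∨ (τ 0 = 0 ∧ τ 1 = 2 ∧ τ 2 = 1) ∨
    (τ 0 = 2 ∧ τ 1 = 1 ∧ τ 2 = 0) ∨ (τ 0 = 1 ∧ τ 1 = 0 ∧ τ 2 = 2) := by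
  revert τ; decide

theorem exists_mem_dihedralMaps_eq_map_comp (σ : Equiv.Perm (Fin 3))
    (ψ₁ ψ₂ ψ₃ : MatN n ≃ₗ[ℂ] MatN n) (Ψ : WN n ≃ₗ[ℂ] WN n)
    (hΨ : ∀ x : Fin 3 → MatN n,
      Ψ (x 0 ⊗ₜ[ℂ] (x 1 ⊗ₜ[ℂ] x 2)) =
        ψ₁ (x (σ⁻¹ 0)) ⊗ₜ[ℂ] (ψ₂ (x (σ⁻¹ 1)) ⊗ₜ[ℂ] ψ₃ (x (σ⁻¹ 2)))) :
    ∃ d ∈ dihedralMaps n, ∃ χ₁ χ₂ χ₃ : MatN n ≃ₗ[ℂ] MatN n,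
      Ψ.toLinearMap = map χ₁.toLinearMap (map χ₂.toLinearMap χ₃.toLinearMap) ∘ₗ d := by
  let t := transposeLinearEquiv (Fin n) (Fin n) ℂ ℂ
  rcases perm_fin_three_cases σ⁻¹ with ⟨h₀, h₁, h₂⟩ | ⟨h₀, h₁, h₂⟩ | ⟨h₀, h₁, h₂⟩ |
    ⟨h₀, h₁, h₂⟩ | ⟨h₀, h₁, h₂⟩ | ⟨h₀, h₁, h₂⟩
  · refine ⟨LinearMap.id, by simp [dihedralMaps], ψ₁, ψ₂, ψ₃, ext_threefold' fun x y z => ?_⟩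
    simpa [h₀, h₁, h₂] using hΨ ![x, y, z]
  · refine ⟨kappaMap n, by simp [dihedralMaps], ψ₁, ψ₂, ψ₃, ext_threefold' fun x y z => ?_⟩
    simpa [h₀, h₁, h₂, kappaMap_tmul] using hΨ ![x, y, z]
  · refine ⟨(kappaMap n).comp (kappaMap n), by simp [dihedralMaps], ψ₁, ψ₂, ψ₃,
      ext_threefold' fun x y z => ?_⟩
    simpa [h₀, h₁, h₂, kappaMap_tmul] using hΨ ![x, y, z]
  · refine ⟨tauMap n, by simp [dihedralMaps], t.trans ψ₁, t.trans ψ₂, t.trans ψ₃,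
      ext_threefold' fun x y z => ?_⟩
    simpa [h₀, h₁, h₂, tauMap_tmul, t] using hΨ ![x, y, z]
  · refine ⟨((kappaMap n).comp (kappaMap n)).comp (tauMap n), by simp [dihedralMaps],
      t.trans ψ₁, t.trans ψ₂, t.trans ψ₃, ext_threefold' fun x y z => ?_⟩
    simpa [h₀, h₁, h₂, tauMap_tmul, kappaMap_tmul, t] using hΨ ![x, y, z]
  · refine ⟨(kappaMap n).comp (tauMap n), by simp [dihedralMaps],
      t.trans ψ₁, t.trans ψ₂, t.trans ψ₃, ext_threefold' fun x y z => ?_⟩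
    simpa [h₀, h₁, h₂, tauMap_tmul, kappaMap_tmul, t] using hΨ ![x, y, z]

end Dihedral

theorem symmetry_group_of_matMul_general (n : ℕ)
    (σ : Equiv.Perm (Fin 3)) (ψ₁ ψ₂ ψ₃ : MatN n ≃ₗ[ℂ] MatN n)
    (Ψ : WN n ≃ₗ[ℂ] WN n)
    (hΨ : ∀ x : Fin 3 → MatN n,
      Ψ (x 0 ⊗ₜ[ℂ] (x 1 ⊗ₜ[ℂ] x 2)) =
        ψ₁ (x (σ⁻¹ 0)) ⊗ₜ[ℂ] (ψ₂ (x (σ⁻¹ 1)) ⊗ₜ[ℂ] ψ₃ (x (σ⁻¹ 2))))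
    (hM : Ψ (MatMul n) = MatMul n) :
    ∃ a b c : MatN n, IsUnit a ∧ IsUnit b ∧ IsUnit c ∧
      ∃ d ∈ ({LinearMap.id, kappaMap n, (kappaMap n).comp (kappaMap n), tauMap n,
              (kappaMap n).comp (tauMap n),
              ((kappaMap n).comp (kappaMap n)).comp (tauMap n)} :
            Set (WN n →ₗ[ℂ] WN n)),
        Ψ.toLinearMap = (phiMap n a b c).comp d := by
  obtain ⟨d, hd, χ₁, χ₂, χ₃, hΨd⟩ := exists_mem_dihedralMaps_eq_map_comp n σ ψ₁ ψ₂ ψ₃ Ψ hΨ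
  have hχ : map χ₁.toLinearMap (map χ₂.toLinearMap χ₃.toLinearMap) (MatMul n) = MatMul n := by
    have := LinearMap.congr_fun hΨd (MatMul n)
    rwa [LinearMap.comp_apply, apply_matMul_of_mem_dihedralMaps n hd, LinearEquiv.coe_coe, hM,
      eq_comm] at this
  obtain ⟨a, b, c, ha, hb, hc, hφ⟩ := exists_map_eq_phiMap_of_map_matMul_eq χ₁ χ₂ χ₃ hχ
  exact ⟨a, b, c, ha, hb, hc, d, hd, hφ ▸ hΨd⟩

/-- The symmetry group of the matrix multiplication tensor is
`PGLₙ × PGLₙ × PGLₙ ⋊ D₃`: any symmetry of `Mₙ` that acts by permuting the three tensor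
factors and acting by a linear automorphism on each factor is a product symmetry
`φ_{a,b,c}` composed with one of the six maps `id, κ, κ², τ, κ∘τ, κ²∘τ`. -/
theorem symmetry_group_of_matMul (n : ℕ) (hn : 1 ≤ n)
    (σ : Equiv.Perm (Fin 3)) (ψ₁ ψ₂ ψ₃ : MatN n ≃ₗ[ℂ] MatN n)
    (Ψ : WN n ≃ₗ[ℂ] WN n)
    (hΨ : ∀ x : Fin 3 → MatN n,
      Ψ (x 0 ⊗ₜ[ℂ] (x 1 ⊗ₜ[ℂ] x 2)) =
        ψ₁ (x (σ⁻¹ 0)) ⊗ₜ[ℂ] (ψ₂ (x (σ⁻¹ 1)) ⊗ₜ[ℂ] ψ₃ (x (σ⁻¹ 2))))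
    (hM : Ψ (MatMul n) = MatMul n) :
    ∃ a b c : MatN n, IsUnit a ∧ IsUnit b ∧ IsUnit c ∧
      ∃ d ∈ ({LinearMap.id, kappaMap n, (kappaMap n).comp (kappaMap n), tauMap n,
              (kappaMap n).comp (tauMap n),
              ((kappaMap n).comp (kappaMap n)).comp (tauMap n)} :
            Set (WN n →ₗ[ℂ] WN n)),
        Ψ.toLinearMap = (phiMap n a b c).comp d :=
  symmetry_group_of_matMul_general n σ ψ₁ ψ₂ ψ₃ Ψ hΨ hM
end
end

section
/- Strassen's decomposition has a cyclic ℤ₃ symmetry and an internal ℤ₂ symmetry: (1) the cyclic shift κ (induced by x⊗y⊗z ↦ z⊗x⊗y) maps the seven-element Strassen set S = {T₁,…,T₇} bijectively onto itself, fixing T₁ and cyclically permuting {T₂,T₃,T₄} and {T₅,T₆,T₇}; (2) with s := [[0,1],[1,0]], the map induced by x⊗y⊗z ↦ (s x s) ⊗ (s y s) ⊗ (s z s) maps S bijectively onto itself, fixing T₁ and exchanging the triple {T₂,T₃,T₄} with the triple {T₅,T₆,T₇}. -/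
open scoped TensorProduct
open Matrix

noncomputable section

def T1 : W2 := (1 : M2) ⊗ₜ[ℂ] ((1 : M2) ⊗ₜ[ℂ] (1 : M2))
def T2 : W2 := E 0 0 ⊗ₜ[ℂ] ((E 0 1 - E 1 1) ⊗ₜ[ℂ] (E 1 0 + E 1 1))
def T3 : W2 := (E 1 0 + E 1 1) ⊗ₜ[ℂ] (E 0 0 ⊗ₜ[ℂ] (E 0 1 - E 1 1))
def T4 : W2 := (E 0 1 - E 1 1) ⊗ₜ[ℂ] ((E 1 0 + E 1 1) ⊗ₜ[ℂ] E 0 0)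
def T5 : W2 := E 1 1 ⊗ₜ[ℂ] ((E 1 0 - E 0 0) ⊗ₜ[ℂ] (E 0 0 + E 0 1))
def T6 : W2 := (E 0 0 + E 0 1) ⊗ₜ[ℂ] (E 1 1 ⊗ₜ[ℂ] (E 1 0 - E 0 0))
def T7 : W2 := (E 1 0 - E 0 0) ⊗ₜ[ℂ] ((E 0 0 + E 0 1) ⊗ₜ[ℂ] E 1 1)

/-- the Strassen set -/
def StrassenSet : Set W2 := {T1, T2, T3, T4, T5, T6, T7}

def s : M2 := !![0, 1; 1, 0]

/-!
Both maps act factorwise on pure tensors, so it suffices to follow each `Tᵢ`. The cyclic shift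
rotates the three factors, and the factors of `T₂, T₃, T₄` (likewise `T₅, T₆, T₇`) are cyclic
rotations of one another. Conjugation by `s` reverses both indices of a matrix unit
(`Eᵢⱼ ↦ E_{3-i,3-j}`), which turns the factors of `T₂, T₃, T₄` into those of `T₅, T₆, T₇` and back.
-/

lemma Set.image_triple {α β : Type*} (f : α → β) (a b c : α) :
    f '' {a, b, c} = {f a, f b, f c} := by
  rw [Set.image_insert_eq, Set.image_pair]

lemma Set.triple_rotate {α : Type*} (a b c : α) : ({b, c, a} : Set α) = {a, b, c} := by
  rw [Set.pair_comm, Set.insert_comm]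

lemma s_mul_s : s * s = 1 := by
  ext i j
  fin_cases i <;> fin_cases j <;> simp [s]

lemma s_mul_E_mul_s (i j : Fin 2) : s * E i j * s = E i.rev j.rev := by
  ext a b
  simp only [mul_apply, Fin.sum_univ_two]
  fin_cases i <;> fin_cases j <;> fin_cases a <;> fin_cases b <;> simp [s, E]

lemma strassenSet_eq : StrassenSet = insert T1 ({T2, T3, T4} ∪ {T5, T6, T7}) := by
  simp only [StrassenSet, Set.insert_union, Set.singleton_union]

lemma cyclicShift_apply_strassen {κ : W2 →ₗ[ℂ] W2}
    (hκ : ∀ x y z : M2, κ (x ⊗ₜ[ℂ] (y ⊗ₜ[ℂ] z)) = z ⊗ₜ[ℂ] (x ⊗ₜ[ℂ] y)) :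
    κ T1 = T1 ∧ κ T2 = T3 ∧ κ T3 = T4 ∧ κ T4 = T2 ∧ κ T5 = T6 ∧ κ T6 = T7 ∧ κ T7 = T5 :=
  ⟨hκ _ _ _, hκ _ _ _, hκ _ _ _, hκ _ _ _, hκ _ _ _, hκ _ _ _, hκ _ _ _⟩

lemma conjS_apply_strassen {Φ : W2 →ₗ[ℂ] W2}
    (hΦ : ∀ x y z : M2,
      Φ (x ⊗ₜ[ℂ] (y ⊗ₜ[ℂ] z)) = (s * x * s) ⊗ₜ[ℂ] ((s * y * s) ⊗ₜ[ℂ] (s * z * s))) :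
    Φ T1 = T1 ∧ Φ T2 = T5 ∧ Φ T3 = T6 ∧ Φ T4 = T7 ∧ Φ T5 = T2 ∧ Φ T6 = T3 ∧ Φ T7 = T4 := by
  have rev_zero : (0 : Fin 2).rev = 1 := rfl
  have rev_one : (1 : Fin 2).rev = 0 := rfl
  refine ⟨?_, ?_, ?_, ?_, ?_, ?_, ?_⟩ <;>
  simp only [T1, T2, T3, T4, T5, T6, T7, hΦ, mul_one, s_mul_s, mul_add, add_mul, mul_sub,
    sub_mul, s_mul_E_mul_s, rev_zero, rev_one, add_comm]

/-- Strassen's decomposition has a cyclic ℤ₃ symmetry and an internal ℤ₂ symmetry. -/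
theorem strassen_Z3_and_internal_Z2
    (κ : W2 →ₗ[ℂ] W2)
    (hκ : ∀ x y z : M2, κ (x ⊗ₜ[ℂ] (y ⊗ₜ[ℂ] z)) = z ⊗ₜ[ℂ] (x ⊗ₜ[ℂ] y))
    (Φ : W2 →ₗ[ℂ] W2)
    (hΦ : ∀ x y z : M2,
      Φ (x ⊗ₜ[ℂ] (y ⊗ₜ[ℂ] z)) = (s * x * s) ⊗ₜ[ℂ] ((s * y * s) ⊗ₜ[ℂ] (s * z * s))) :
    (⇑κ '' StrassenSet = StrassenSet ∧
      κ T1 = T1 ∧ κ T2 = T3 ∧ κ T3 = T4 ∧ κ T4 = T2 ∧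
      κ T5 = T6 ∧ κ T6 = T7 ∧ κ T7 = T5) ∧
    (⇑Φ '' StrassenSet = StrassenSet ∧ Φ T1 = T1 ∧
      ⇑Φ '' ({T2, T3, T4} : Set W2) = ({T5, T6, T7} : Set W2) ∧
      ⇑Φ '' ({T5, T6, T7} : Set W2) = ({T2, T3, T4} : Set W2)) := by
  obtain ⟨k1, k2, k3, k4, k5, k6, k7⟩ := cyclicShift_apply_strassen hκ
  obtain ⟨p1, p2, p3, p4, p5, p6, p7⟩ := conjS_apply_strassen hΦ
  have hΦ234 : ⇑Φ '' {T2, T3, T4} = {T5, T6, T7} := by rw [Set.image_triple, p2, p3, p4]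
  have hΦ567 : ⇑Φ '' {T5, T6, T7} = {T2, T3, T4} := by rw [Set.image_triple, p5, p6, p7]
  refine ⟨⟨?_, k1, k2, k3, k4, k5, k6, k7⟩, ?_, p1, hΦ234, hΦ567⟩
  · rw [strassenSet_eq, Set.image_insert_eq, Set.image_union, Set.image_triple, Set.image_triple,
      k1, k2, k3, k4, k5, k6, k7, Set.triple_rotate T2, Set.triple_rotate T5]
  · rw [strassenSet_eq, Set.image_insert_eq, Set.image_union, hΦ234, hΦ567, p1, Set.union_comm]
end
end

section
/- The member of the Strassen family given by the decomposition M₂ = A⊗A⊗A + B⊗B⊗B + C⊗C⊗C + D⊗D⊗D + (X⊗Y⊗Z + Y⊗Z⊗X + Z⊗X⊗Y) has the following symmetries: (1) the cyclic shift κ (induced by x⊗y⊗z ↦ z⊗x⊗y) maps the seven-element set S₅ := {A⊗A⊗A, B⊗B⊗B, C⊗C⊗C, D⊗D⊗D, X⊗Y⊗Z, Y⊗Z⊗X, Z⊗X⊗Y} onto itself, fixing the four tensors A⊗A⊗A, B⊗B⊗B, C⊗C⊗C, D⊗D⊗D and cyclically permuting the remaining three; (2) the diagonal conjugation map induced by x⊗y⊗z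 ↦ (A x A⁻¹)⊗(A y A⁻¹)⊗(A z A⁻¹) maps S₅ onto itself, fixing A⊗A⊗A, sending B⊗B⊗B ↦ D⊗D⊗D ↦ C⊗C⊗C ↦ B⊗B⊗B and X⊗Y⊗Z ↦ Y⊗Z⊗X ↦ Z⊗X⊗Y ↦ X⊗Y⊗Z. -/
open scoped TensorProduct
open Matrix

noncomputable section

/-- the seven-element set of this member of the Strassen family -/
def S5 : Set W2 :=
  {A ⊗ₜ[ℂ] (A ⊗ₜ[ℂ] A), B ⊗ₜ[ℂ] (B ⊗ₜ[ℂ] B), C ⊗ₜ[ℂ] (C ⊗ₜ[ℂ] C), D ⊗ₜ[ℂ] (D ⊗ₜ[ℂ] D),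
   X ⊗ₜ[ℂ] (Y ⊗ₜ[ℂ] Z), Y ⊗ₜ[ℂ] (Z ⊗ₜ[ℂ] X), Z ⊗ₜ[ℂ] (X ⊗ₜ[ℂ] Y)}

set_option maxHeartbeats 1000000 in
/-- Symmetries of the member of the Strassen family from equations (17)-(21):
the cyclic shift κ and the diagonal conjugation by A. -/
theorem strassen_family_member_symmetries
    (κ : W2 →ₗ[ℂ] W2)
    (hκ : ∀ x y z : M2, κ (x ⊗ₜ[ℂ] (y ⊗ₜ[ℂ] z)) = z ⊗ₜ[ℂ] (x ⊗ₜ[ℂ] y))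
    (Φ : W2 →ₗ[ℂ] W2)
    (hΦ : ∀ x y z : M2,
      Φ (x ⊗ₜ[ℂ] (y ⊗ₜ[ℂ] z)) =
        (A * x * A⁻¹) ⊗ₜ[ℂ] ((A * y * A⁻¹) ⊗ₜ[ℂ] (A * z * A⁻¹))) :
    (⇑κ '' S5 = S5 ∧
      κ (A ⊗ₜ[ℂ] (A ⊗ₜ[ℂ] A)) = A ⊗ₜ[ℂ] (A ⊗ₜ[ℂ] A) ∧
      κ (B ⊗ₜ[ℂ] (B ⊗ₜ[ℂ] B)) = B ⊗ₜ[ℂ] (B ⊗ₜ[ℂ] B) ∧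
      κ (C ⊗ₜ[ℂ] (C ⊗ₜ[ℂ] C)) = C ⊗ₜ[ℂ] (C ⊗ₜ[ℂ] C) ∧
      κ (D ⊗ₜ[ℂ] (D ⊗ₜ[ℂ] D)) = D ⊗ₜ[ℂ] (D ⊗ₜ[ℂ] D) ∧
      κ (X ⊗ₜ[ℂ] (Y ⊗ₜ[ℂ] Z)) = Z ⊗ₜ[ℂ] (X ⊗ₜ[ℂ] Y) ∧
      κ (Z ⊗ₜ[ℂ] (X ⊗ₜ[ℂ] Y)) = Y ⊗ₜ[ℂ] (Z ⊗ₜ[ℂ] X) ∧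
      κ (Y ⊗ₜ[ℂ] (Z ⊗ₜ[ℂ] X)) = X ⊗ₜ[ℂ] (Y ⊗ₜ[ℂ] Z)) ∧
    (⇑Φ '' S5 = S5 ∧
      Φ (A ⊗ₜ[ℂ] (A ⊗ₜ[ℂ] A)) = A ⊗ₜ[ℂ] (A ⊗ₜ[ℂ] A) ∧
      Φ (B ⊗ₜ[ℂ] (B ⊗ₜ[ℂ] B)) = D ⊗ₜ[ℂ] (D ⊗ₜ[ℂ] D) ∧
      Φ (D ⊗ₜ[ℂ] (D ⊗ₜ[ℂ] D)) = C ⊗ₜ[ℂ] (C ⊗ₜ[ℂ] C) ∧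
      Φ (C ⊗ₜ[ℂ] (C ⊗ₜ[ℂ] C)) = B ⊗ₜ[ℂ] (B ⊗ₜ[ℂ] B) ∧
      Φ (X ⊗ₜ[ℂ] (Y ⊗ₜ[ℂ] Z)) = Y ⊗ₜ[ℂ] (Z ⊗ₜ[ℂ] X) ∧
      Φ (Y ⊗ₜ[ℂ] (Z ⊗ₜ[ℂ] X)) = Z ⊗ₜ[ℂ] (X ⊗ₜ[ℂ] Y) ∧
      Φ (Z ⊗ₜ[ℂ] (X ⊗ₜ[ℂ] Y)) = X ⊗ₜ[ℂ] (Y ⊗ₜ[ℂ] Z)) := by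
  have hAi : A⁻¹ = !![-1, 1; -1, 0] := by
    apply Matrix.inv_eq_right_inv
    ext i j
    fin_cases i <;> fin_cases j <;> simp [A, Matrix.mul_apply, Fin.sum_univ_two]
  have cA : A * A * A⁻¹ = A := by
    rw [hAi]; ext i j
    fin_cases i <;> fin_cases j <;>
      simp [A, Matrix.mul_apply, Fin.sum_univ_two] <;> norm_num
  have cB : A * B * A⁻¹ = D := by
    rw [hAi]; ext i j
    fin_cases i <;> fin_cases j <;>
      simp [A, B, D, Matrix.mul_apply, Fin.sum_univ_two] <;> norm_num
  have cC : A * C * A⁻¹ = B := by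
    rw [hAi]; ext i j
    fin_cases i <;> fin_cases j <;>
      simp [A, B, C, Matrix.mul_apply, Fin.sum_univ_two] <;> norm_num
  have cD : A * D * A⁻¹ = C := by
    rw [hAi]; ext i j
    fin_cases i <;> fin_cases j <;>
      simp [A, C, D, Matrix.mul_apply, Fin.sum_univ_two] <;> norm_num
  have cX : A * X * A⁻¹ = -Y := by
    rw [hAi]; ext i j
    fin_cases i <;> fin_cases j <;>
      simp [A, X, Y, Matrix.mul_apply, Fin.sum_univ_two] <;> norm_num
  have cY : A * Y * A⁻¹ = Z := by
    rw [hAi]; ext i j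
    fin_cases i <;> fin_cases j <;>
      simp [A, Y, Z, Matrix.mul_apply, Fin.sum_univ_two] <;> norm_num
  have cZ : A * Z * A⁻¹ = -X := by
    rw [hAi]; ext i j
    fin_cases i <;> fin_cases j <;>
      simp [A, X, Z, Matrix.mul_apply, Fin.sum_univ_two] <;> norm_num
  have k1 := hκ A A A
  have k2 := hκ B B B
  have k3 := hκ C C C
  have k4 := hκ D D D
  have k5 := hκ X Y Z
  have k6 := hκ Y Z X
  have k7 := hκ Z X Y
  have p1 : Φ (A ⊗ₜ[ℂ] (A ⊗ₜ[ℂ] A)) = A ⊗ₜ[ℂ] (A ⊗ₜ[ℂ] A) := by rw [hΦ, cA]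
  have p2 : Φ (B ⊗ₜ[ℂ] (B ⊗ₜ[ℂ] B)) = D ⊗ₜ[ℂ] (D ⊗ₜ[ℂ] D) := by rw [hΦ, cB]
  have p3 : Φ (C ⊗ₜ[ℂ] (C ⊗ₜ[ℂ] C)) = B ⊗ₜ[ℂ] (B ⊗ₜ[ℂ] B) := by rw [hΦ, cC]
  have p4 : Φ (D ⊗ₜ[ℂ] (D ⊗ₜ[ℂ] D)) = C ⊗ₜ[ℂ] (C ⊗ₜ[ℂ] C) := by rw [hΦ, cD]
  have p5 : Φ (X ⊗ₜ[ℂ] (Y ⊗ₜ[ℂ] Z)) = Y ⊗ₜ[ℂ] (Z ⊗ₜ[ℂ] X) := by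
    rw [hΦ, cX, cY, cZ]
    simp only [TensorProduct.neg_tmul, TensorProduct.tmul_neg]
    exact neg_neg (Y ⊗ₜ[ℂ] (Z ⊗ₜ[ℂ] X) : W2)
  have p6 : Φ (Y ⊗ₜ[ℂ] (Z ⊗ₜ[ℂ] X)) = Z ⊗ₜ[ℂ] (X ⊗ₜ[ℂ] Y) := by
    rw [hΦ, cX, cY, cZ]
    simp only [TensorProduct.neg_tmul, TensorProduct.tmul_neg]
    exact neg_neg (Z ⊗ₜ[ℂ] (X ⊗ₜ[ℂ] Y) : W2)
  have p7 : Φ (Z ⊗ₜ[ℂ] (X ⊗ₜ[ℂ] Y)) = X ⊗ₜ[ℂ] (Y ⊗ₜ[ℂ] Z) := by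
    rw [hΦ, cX, cY, cZ]
    simp only [TensorProduct.neg_tmul, TensorProduct.tmul_neg]
    exact neg_neg (X ⊗ₜ[ℂ] (Y ⊗ₜ[ℂ] Z) : W2)
  refine ⟨⟨?_, k1, k2, k3, k4, k5, k7, k6⟩, ⟨?_, p1, p2, p4, p3, p5, p6, p7⟩⟩
  · simp only [S5, Set.image_insert_eq, Set.image_singleton, k1, k2, k3, k4, k5, k6, k7]
    ext w; simp only [Set.mem_insert_iff, Set.mem_singleton_iff]; tauto
  · simp only [S5, Set.image_insert_eq, Set.image_singleton, p1, p2, p3, p4, p5, p6, p7]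
    ext w; simp only [Set.mem_insert_iff, Set.mem_singleton_iff]; tauto
end
end

section
/- The matrix multiplication tensor is characterized by its symmetries: let n ≥ 1 and let T ∈ W be a tensor such that φ_{a,b,c}(T) = T for all invertible n×n complex matrices a, b, c. Then there exists λ ∈ ℂ with T = λ·Mₙ. -/
/-!
Write `T` in the basis `E_{ij} ⊗ E_{kl} ⊗ E_{pq}`. The diagonal symmetries `φ_{d,e,f}` scale this
basis tensor by `d_i e_j⁻¹ e_k f_l⁻¹ f_p d_q⁻¹`; unless `j = k`, `l = p` and `q = i` some choice of
`d, e, f` makes the factor `2`, so every coefficient of `T` off the cyclic triples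
`E_{ij} ⊗ E_{jk} ⊗ E_{ki}` vanishes. The symmetries `φ_{a,b,c}` by three transposition matrices
permute the basis, carrying any cyclic triple to any other, so the cyclic coefficients of `T` are
all equal, and `T` is that common value times `Mₙ`.
-/

open scoped TensorProduct
open Matrix

noncomputable section

namespace Module.Basis

variable {ι R M : Type*} [CommSemiring R] [AddCommMonoid M] [Module R M]

theorem repr_map_apply_of_apply_eq_smul (b : Basis ι R M) {f : M →ₗ[R] M} {π : ι → ι}
    (hπ : Function.Injective π) {c : ι → R} (hf : ∀ i, f (b i) = c i • b (π i)) (x : M)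
    (i : ι) : b.repr (f x) (π i) = c i * b.repr x i := by
  have : Finsupp.lapply (π i) ∘ₗ b.repr.toLinearMap ∘ₗ f =
      c i • (Finsupp.lapply i ∘ₗ b.repr.toLinearMap) :=
    b.ext fun j => by
      obtain rfl | hji := eq_or_ne j i
      · simp [hf]
      · simp [hf, hji, hπ.ne hji]
  exact LinearMap.congr_fun this x

end Module.Basis

namespace Matrix

variable {ι K : Type*} [Fintype ι] [DecidableEq ι] [Field K]

theorem inv_diagonal_of_ne_zero {d : ι → K} (hd : ∀ i, d i ≠ 0) :
    (diagonal d)⁻¹ = diagonal d⁻¹ :=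
  inv_eq_right_inv <| by
    rw [diagonal_mul_diagonal, ← diagonal_one]
    exact congrArg diagonal (funext fun i => mul_inv_cancel₀ (hd i))

theorem isUnit_diagonal_of_ne_zero {d : ι → K} (hd : ∀ i, d i ≠ 0) : IsUnit (diagonal d) :=
  isUnit_diagonal.mpr (Pi.isUnit_iff.mpr fun i => (hd i).isUnit)

theorem isUnit_swap (i j : ι) : IsUnit (swap K i j) :=
  (GeneralLinearGroup.swap K i j).isUnit

end Matrix

def cycleIndex {ι : Type*} (x : ι × ι × ι) : (ι × ι) × (ι × ι) × (ι × ι) :=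
  ((x.1, x.2.1), (x.2.1, x.2.2), (x.2.2, x.1))

theorem cycleIndex_injective {ι : Type*} : Function.Injective (cycleIndex (ι := ι)) := by
  rintro ⟨i, j, k⟩ ⟨i', j', k'⟩ h
  simp_all [cycleIndex]

section TripleSandwich

variable {ι K : Type*} [Fintype ι] [DecidableEq ι] [Field K]

local notation "𝕄" => Matrix ι ι K
local notation "𝕎" => Matrix ι ι K ⊗[K] (Matrix ι ι K ⊗[K] Matrix ι ι K)

variable (ι K) in
def matMulTensor : 𝕎 :=
  ∑ i : ι, ∑ j : ι, ∑ k : ι, single i j (1 : K) ⊗ₜ[K] (single j k (1 : K) ⊗ₜ[K] single k i (1 : K))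

def sandwichMap (a b : 𝕄) : 𝕄 →ₗ[K] 𝕄 :=
  LinearMap.mulLeft K a ∘ₗ LinearMap.mulRight K b⁻¹

theorem sandwichMap_apply (a b x : 𝕄) : sandwichMap a b x = a * x * b⁻¹ := by
  simp [sandwichMap, mul_assoc]

theorem sandwichMap_diagonal_single {d e : ι → K} (he : ∀ i, e i ≠ 0) (p q : ι) :
    sandwichMap (diagonal d) (diagonal e) (single p q 1) = (d p * (e q)⁻¹) • single p q 1 := by
  rw [sandwichMap_apply, inv_diagonal_of_ne_zero he]
  ext r s
  simp only [mul_diagonal, diagonal_mul, single_apply, Pi.inv_apply, Matrix.smul_apply,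
    smul_eq_mul]
  split_ifs with h <;> simp [h]

theorem sandwichMap_swap_single (i i' j j' p q : ι) :
    sandwichMap (swap K i i') (swap K j j') (single p q 1) =
      single (Equiv.swap i i' p) (Equiv.swap j j' q) 1 := by
  rw [sandwichMap_apply, inv_eq_left_inv (swap_mul_self j j')]
  simp [swap, PEquiv.toMatrix_toPEquiv_mul, PEquiv.mul_toMatrix_toPEquiv]

/-- The symmetry `φ_{a,b,c}`. -/
def tripleSandwich (a b c : 𝕄) : 𝕎 →ₗ[K] 𝕎 :=
  TensorProduct.map (sandwichMap a b) (TensorProduct.map (sandwichMap b c) (sandwichMap c a))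

theorem tripleSandwich_tmul (a b c x y z : 𝕄) :
    tripleSandwich a b c (x ⊗ₜ[K] (y ⊗ₜ[K] z)) =
      (a * x * b⁻¹) ⊗ₜ[K] ((b * y * c⁻¹) ⊗ₜ[K] (c * z * a⁻¹)) := by
  simp [tripleSandwich, sandwichMap_apply]

def IsSandwichInvariant (T : 𝕎) : Prop :=
  ∀ a b c : 𝕄, IsUnit a → IsUnit b → IsUnit c → tripleSandwich a b c T = T

variable (ι K) in
def tripleStdBasis : Module.Basis ((ι × ι) × (ι × ι) × (ι × ι)) K 𝕎 :=
  (stdBasis K ι ι).tensorProduct ((stdBasis K ι ι).tensorProduct (stdBasis K ι ι))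

theorem tripleStdBasis_apply (q : (ι × ι) × (ι × ι) × (ι × ι)) :
    tripleStdBasis ι K q =
      single q.1.1 q.1.2 1 ⊗ₜ[K] (single q.2.1.1 q.2.1.2 1 ⊗ₜ[K] single q.2.2.1 q.2.2.2 1) := by
  obtain ⟨⟨i, i'⟩, ⟨j, j'⟩, ⟨k, k'⟩⟩ := q
  simp [tripleStdBasis, Module.Basis.tensorProduct_apply', stdBasis_eq_single]

theorem matMulTensor_eq_sum_tripleStdBasis :
    matMulTensor ι K = ∑ x, tripleStdBasis ι K (cycleIndex x) := by
  simp [matMulTensor, tripleStdBasis_apply, cycleIndex, Fintype.sum_prod_type]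

theorem tripleSandwich_diagonal_tripleStdBasis {d e f : ι → K} (hd : ∀ i, d i ≠ 0)
    (he : ∀ i, e i ≠ 0) (hf : ∀ i, f i ≠ 0) (q : (ι × ι) × (ι × ι) × (ι × ι)) :
    tripleSandwich (diagonal d) (diagonal e) (diagonal f) (tripleStdBasis ι K q) =
      (d q.1.1 * (e q.1.2)⁻¹ * (e q.2.1.1 * (f q.2.1.2)⁻¹) * (f q.2.2.1 * (d q.2.2.2)⁻¹)) •
        tripleStdBasis ι K q := by
  simp only [tripleStdBasis_apply, tripleSandwich, TensorProduct.map_tmul,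
    sandwichMap_diagonal_single hd, sandwichMap_diagonal_single he, sandwichMap_diagonal_single hf,
    ← TensorProduct.smul_tmul', TensorProduct.tmul_smul, smul_smul]
  congr 1
  ring

theorem tripleSandwich_swap_tripleStdBasis (i i' j j' k k' : ι)
    (q : (ι × ι) × (ι × ι) × (ι × ι)) :
    tripleSandwich (swap K i i') (swap K j j') (swap K k k') (tripleStdBasis ι K q) =
      tripleStdBasis ι K (Prod.map (Prod.map (Equiv.swap i i') (Equiv.swap j j'))
        (Prod.map (Prod.map (Equiv.swap j j') (Equiv.swap k k'))
          (Prod.map (Equiv.swap k k') (Equiv.swap i i'))) q) := by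
  simp only [tripleStdBasis_apply, tripleSandwich, TensorProduct.map_tmul, sandwichMap_swap_single]
  rfl

namespace IsSandwichInvariant

variable {T : Matrix ι ι K ⊗[K] (Matrix ι ι K ⊗[K] Matrix ι ι K)} (hT : IsSandwichInvariant T)
include hT

theorem repr_eq_zero_of_weight_ne_one {d e f : ι → K} (hd : ∀ i, d i ≠ 0)
    (he : ∀ i, e i ≠ 0) (hf : ∀ i, f i ≠ 0) {q : (ι × ι) × (ι × ι) × (ι × ι)}
    (hw : d q.1.1 * (e q.1.2)⁻¹ * (e q.2.1.1 * (f q.2.1.2)⁻¹) * (f q.2.2.1 * (d q.2.2.2)⁻¹) ≠ 1) :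
    (tripleStdBasis ι K).repr T q = 0 := by
  have h := (tripleStdBasis ι K).repr_map_apply_of_apply_eq_smul Function.injective_id
    (tripleSandwich_diagonal_tripleStdBasis hd he hf) T q
  rw [hT _ _ _ (isUnit_diagonal_of_ne_zero hd) (isUnit_diagonal_of_ne_zero he)
    (isUnit_diagonal_of_ne_zero hf)] at h
  exact (mul_left_eq_self₀.mp h.symm).resolve_left hw

theorem repr_eq_zero_of_notMem_range [NeZero (2 : K)] {q : (ι × ι) × (ι × ι) × (ι × ι)}
    (hq : q ∉ Set.range cycleIndex) : (tripleStdBasis ι K).repr T q = 0 := by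
  obtain ⟨⟨i, j⟩, ⟨j', k⟩, ⟨k', i'⟩⟩ := q
  have hne : j ≠ j' ∨ k ≠ k' ∨ i' ≠ i := by
    by_contra! h
    obtain ⟨rfl, rfl, rfl⟩ := h
    exact hq ⟨(i', j, k), rfl⟩
  have one_ne : ∀ l : ι, (1 : ι → K) l ≠ 0 := fun _ => one_ne_zero
  have mulSingle_ne : ∀ i l : ι, (Pi.mulSingle i (2 : K) : ι → K) l ≠ 0 := fun i l => by
    rw [Pi.mulSingle_apply]
    split_ifs
    exacts [two_ne_zero, one_ne_zero]
  have two_ne_one : (2 : K) ≠ 1 := fun h => one_ne_zero (by linear_combination h)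
  rcases hne with h | h | h
  · exact hT.repr_eq_zero_of_weight_ne_one one_ne (mulSingle_ne j') one_ne
      (by simpa [h] using two_ne_one)
  · exact hT.repr_eq_zero_of_weight_ne_one one_ne one_ne (mulSingle_ne k')
      (by simpa [h] using two_ne_one)
  · exact hT.repr_eq_zero_of_weight_ne_one (mulSingle_ne i) one_ne one_ne
      (by simpa [h] using two_ne_one)

theorem repr_cycleIndex_eq (x y : ι × ι × ι) :
    (tripleStdBasis ι K).repr T (cycleIndex x) = (tripleStdBasis ι K).repr T (cycleIndex y) := by
  obtain ⟨i, j, k⟩ := x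
  obtain ⟨i', j', k'⟩ := y
  have hπ : Function.Injective (Prod.map (Prod.map (Equiv.swap i i') (Equiv.swap j j'))
      (Prod.map (Prod.map (Equiv.swap j j') (Equiv.swap k k'))
        (Prod.map (Equiv.swap k k') (Equiv.swap i i')))) :=
    ((Equiv.injective _).prodMap (Equiv.injective _)).prodMap
      (((Equiv.injective _).prodMap (Equiv.injective _)).prodMap
        ((Equiv.injective _).prodMap (Equiv.injective _)))
  have h := (tripleStdBasis ι K).repr_map_apply_of_apply_eq_smul (c := 1) hπ
    (fun q => (tripleSandwich_swap_tripleStdBasis i i' j j' k k' q).trans (one_smul K _).symm)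
    T (cycleIndex (i, j, k))
  rw [hT _ _ _ (isUnit_swap i i') (isUnit_swap j j') (isUnit_swap k k')] at h
  simpa [cycleIndex] using h.symm

theorem eq_sum_repr_cycleIndex [NeZero (2 : K)] :
    T = ∑ x, (tripleStdBasis ι K).repr T (cycleIndex x) • tripleStdBasis ι K (cycleIndex x) := by
  conv_lhs => rw [← (tripleStdBasis ι K).sum_repr T]
  refine (Fintype.sum_of_injective cycleIndex cycleIndex_injective _ _ (fun q hq => ?_)
    fun _ => rfl).symm
  rw [hT.repr_eq_zero_of_notMem_range hq, zero_smul]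

theorem exists_eq_smul_matMulTensor [NeZero (2 : K)] : ∃ lam : K, T = lam • matMulTensor ι K := by
  obtain ⟨lam, hlam⟩ : ∃ lam, ∀ x, (tripleStdBasis ι K).repr T (cycleIndex x) = lam := by
    rcases isEmpty_or_nonempty ι with _ | ⟨⟨i⟩⟩
    · exact ⟨0, fun x => isEmptyElim x.1⟩
    · exact ⟨_, fun x => hT.repr_cycleIndex_eq x (i, i, i)⟩
  refine ⟨lam, ?_⟩
  rw [hT.eq_sum_repr_cycleIndex, matMulTensor_eq_sum_tripleStdBasis, Finset.smul_sum]
  simp_rw [hlam]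

end IsSandwichInvariant

end TripleSandwich

theorem matMul_characterized_by_symmetries_general (n : ℕ) (T : WN n)
    (hT : ∀ a b c : MatN n, IsUnit a → IsUnit b → IsUnit c →
      ∀ φ : WN n →ₗ[ℂ] WN n,
        (∀ x y z : MatN n,
          φ (x ⊗ₜ[ℂ] (y ⊗ₜ[ℂ] z)) = (a * x * b⁻¹) ⊗ₜ[ℂ] ((b * y * c⁻¹) ⊗ₜ[ℂ] (c * z * a⁻¹))) →
        φ T = T) :
    ∃ lam : ℂ, T = lam • MatMul n :=
  IsSandwichInvariant.exists_eq_smul_matMulTensor fun a b c ha hb hc =>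
    hT a b c ha hb hc _ (tripleSandwich_tmul a b c)

/-- The matrix multiplication tensor is characterized by its symmetries: any tensor
invariant under all product symmetries `φ_{a,b,c}` is a scalar multiple of `Mₙ`. -/
theorem matMul_characterized_by_symmetries (n : ℕ) (hn : 1 ≤ n) (T : WN n)
    (hT : ∀ a b c : MatN n, IsUnit a → IsUnit b → IsUnit c →
      ∀ φ : WN n →ₗ[ℂ] WN n,
        (∀ x y z : MatN n,
          φ (x ⊗ₜ[ℂ] (y ⊗ₜ[ℂ] z)) = (a * x * b⁻¹) ⊗ₜ[ℂ] ((b * y * c⁻¹) ⊗ₜ[ℂ] (c * z * a⁻¹))) →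
        φ T = T) :
    ∃ lam : ℂ, T = lam • MatMul n :=
  matMul_characterized_by_symmetries_general n T hT
end
end
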